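/- Let M be a monoid equipped with a linear order ≤, and let k ≥ 0. Call an M-pigmented word a k-stalactite if no step of ⇝_1 or ⇝_2 applies to it. Then every equivalence class of the relation ≡_k on P(M)(n), defined by p ≡_k p' iff first_k(p) = first_k(p') and p' is a permutation of p, contains exactly one k-stalactite. -/

import Mathlib

/-- An `M`-pigmented word of arity `n`: a list of letters `(i, α)` whose value is
`i ∈ Fin n` (representing the value `i + 1 ∈ {1, …, n}`) and whose pigment is `α ∈ M`. -/
abbrev PW (M : Type*) (n : ℕ) : Type _ := List (Fin n × M)

/-- `firstKAux k pre p` keeps those letters of `p` whose position is a left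
`k`-witness, given that the prefix `pre` has already been read. -/
def firstKAux {M : Type*} {n : ℕ} (k : ℕ) : PW M n → PW M n → PW M n
  | _, [] => []
  | pre, l :: t =>
    if pre.countP (fun x => decide (x.1 = l.1)) < k
    then l :: firstKAux k (pre ++ [l]) t
    else firstKAux k (pre ++ [l]) t

/-- `firstK k p` keeps, for each value, the first `k` occurrences of that value in `p`
(the letters at left `k`-witness positions). -/
def firstK {M : Type*} {n : ℕ} (k : ℕ) (p : PW M n) : PW M n := firstKAux k [] p

/-- The number of letters of `p` whose value is `i`. -/
def countV {M : Type*} {n : ℕ} (p : PW M n) (i : Fin n) : ℕ :=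
  p.countP (fun x => decide (x.1 = i))

/-- `⇝₁`: swap two adjacent letters `i₁^{α₁} i₂^{α₂}` with distinct values, where the
first shown position is not a left `k`-witness and the second one is. -/
def StalStep1 {M : Type*} {n : ℕ} (k : ℕ) (u v : PW M n) : Prop :=
  ∃ (p p' : PW M n) (i₁ i₂ : Fin n) (α₁ α₂ : M),
    u = p ++ (i₁, α₁) :: (i₂, α₂) :: p' ∧ v = p ++ (i₂, α₂) :: (i₁, α₁) :: p' ∧
    i₁ ≠ i₂ ∧ k ≤ countV p i₁ ∧ countV p i₂ < k

/-- `⇝₂`: swap two adjacent distinct letters `i₁^{α₁} i₂^{α₂}` with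
`i₂^{α₂} ⊴ i₁^{α₁}`, where neither shown position is a left `k`-witness. -/
def StalStep2 {M : Type*} [LinearOrder M] {n : ℕ} (k : ℕ) (u v : PW M n) : Prop :=
  ∃ (p p' : PW M n) (i₁ i₂ : Fin n) (α₁ α₂ : M),
    u = p ++ (i₁, α₁) :: (i₂, α₂) :: p' ∧ v = p ++ (i₂, α₂) :: (i₁, α₁) :: p' ∧
    k ≤ countV p i₁ ∧ k ≤ countV (p ++ [(i₁, α₁)]) i₂ ∧
    (i₁, α₁) ≠ (i₂, α₂) ∧ (i₂ < i₁ ∨ (i₂ = i₁ ∧ α₂ ≤ α₁))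

/-- A `k`-stalactite: an `M`-pigmented word to which no step of `⇝₁` or `⇝₂` applies. -/
def IsStalactite {M : Type*} [LinearOrder M] {n : ℕ} (k : ℕ) (p : PW M n) : Prop :=
  ∀ v : PW M n, ¬ StalStep1 k p v ∧ ¬ StalStep2 k p v

/-!
The witness letters of a word `q` form the subword `firstK k q`, and `⇝₁` moves a witness
letter in front of a non-witness one, so a stalactite is `firstK k q` followed by the
non-witness letters. Inside that tail `⇝₂` sorts by `⊴`, hence a stalactite is exactly
`firstK k q ++ t` with `t` sorted. In a class of `≡ₖ` both `firstK k q` and the multiset of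
`t` are fixed, so sorting the leftover letters of `p` gives the unique stalactite.
-/

section Words

variable {M : Type*} {n : ℕ}

section Count

@[simp] lemma countV_nil (i : Fin n) : countV ([] : PW M n) i = 0 := rfl

lemma countV_append (u v : PW M n) (i : Fin n) :
    countV (u ++ v) i = countV u i + countV v i := List.countP_append

lemma countV_cons_self (l : Fin n × M) (t : PW M n) :
    countV (l :: t) l.1 = countV t l.1 + 1 := by
  simp [countV]

lemma countV_cons_of_ne {l : Fin n × M} {i : Fin n} (t : PW M n) (h : l.1 ≠ i) :
    countV (l :: t) i = countV t i := by
  simp [countV, h]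

lemma countV_append_singleton_self (pre : PW M n) (l : Fin n × M) :
    countV (pre ++ [l]) l.1 = countV pre l.1 + 1 := by
  rw [countV_append, countV_cons_self, countV_nil]

lemma countV_append_singleton_of_ne {l : Fin n × M} {i : Fin n} (pre : PW M n)
    (h : l.1 ≠ i) : countV (pre ++ [l]) i = countV pre i := by
  rw [countV_append, countV_cons_of_ne _ h, countV_nil, add_zero]

end Count

section FirstK

variable (k : ℕ)

lemma firstKAux_cons (pre : PW M n) (l : Fin n × M) (t : PW M n) :
    firstKAux k pre (l :: t) =
      if countV pre l.1 < k then l :: firstKAux k (pre ++ [l]) t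
      else firstKAux k (pre ++ [l]) t := rfl

lemma firstKAux_sublist (pre p : PW M n) : (firstKAux k pre p).Sublist p := by
  induction p generalizing pre with
  | nil => exact List.Sublist.slnil
  | cons l t ih =>
    rw [firstKAux_cons]
    split_ifs
    · exact (ih _).cons_cons l
    · exact (ih _).cons l

lemma firstK_sublist (p : PW M n) : (firstK k p).Sublist p :=
  firstKAux_sublist k [] p

lemma countV_firstKAux (pre p : PW M n) (i : Fin n) :
    countV (firstKAux k pre p) i = min (countV p i) (k - countV pre i) := by
  induction p generalizing pre with
  | nil => simp [firstKAux]
  | cons l t ih =>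
    rw [firstKAux_cons]
    rcases eq_or_ne l.1 i with rfl | hne
    · split_ifs <;>
        simp only [countV_cons_self, ih, countV_append_singleton_self] <;> omega
    · split_ifs <;>
        simp only [countV_cons_of_ne _ hne, ih, countV_append_singleton_of_ne _ hne]

lemma countV_firstK (p : PW M n) (i : Fin n) :
    countV (firstK k p) i = min (countV p i) k := by
  simpa [firstK] using countV_firstKAux k [] p i

lemma firstKAux_congr {pre pre' : PW M n} (p : PW M n)
    (h : ∀ i, min (countV pre i) k = min (countV pre' i) k) :
    firstKAux k pre p = firstKAux k pre' p := by
  induction p generalizing pre pre' with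
  | nil => rfl
  | cons l t ih =>
    have hnext : ∀ i, min (countV (pre ++ [l]) i) k = min (countV (pre' ++ [l]) i) k := by
      intro i
      have := h i
      rcases eq_or_ne l.1 i with rfl | hne
      · rw [countV_append_singleton_self, countV_append_singleton_self]; omega
      · rw [countV_append_singleton_of_ne _ hne, countV_append_singleton_of_ne _ hne]
        exact this
    have hl := h l.1
    rw [firstKAux_cons, firstKAux_cons, ih hnext]
    split_ifs <;> first | rfl | omega

lemma firstKAux_firstKAux (pre p : PW M n) :
    firstKAux k pre (firstKAux k pre p) = firstKAux k pre p := by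
  induction p generalizing pre with
  | nil => rfl
  | cons l t ih =>
    rw [firstKAux_cons]
    split_ifs with h
    · rw [firstKAux_cons, if_pos h, ih]
    · -- `l` is not a witness, so reading it does not change the truncated counts
      rw [firstKAux_congr k _ (pre' := pre ++ [l]), ih]
      intro i
      rcases eq_or_ne l.1 i with rfl | hne
      · rw [countV_append_singleton_self]; omega
      · rw [countV_append_singleton_of_ne _ hne]

lemma firstK_firstK (p : PW M n) : firstK k (firstK k p) = firstK k p :=
  firstKAux_firstKAux k [] p

lemma firstKAux_append (pre u v : PW M n) :
    firstKAux k pre (u ++ v) = firstKAux k pre u ++ firstKAux k (pre ++ u) v := by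
  induction u generalizing pre with
  | nil => simp [firstKAux]
  | cons l t ih =>
    rw [List.cons_append, firstKAux_cons, firstKAux_cons]
    split_ifs <;> simp [ih]

lemma firstKAux_eq_nil {pre t : PW M n} (h : ∀ x ∈ t, k ≤ countV pre x.1) :
    firstKAux k pre t = [] := by
  induction t generalizing pre with
  | nil => rfl
  | cons l t ih =>
    rw [firstKAux_cons, if_neg (not_lt.mpr (h l List.mem_cons_self))]
    refine ih fun x hx => ?_
    rw [countV_append]
    exact (h x (List.mem_cons_of_mem l hx)).trans (Nat.le_add_right _ _)

lemma firstK_append_of_le_countV {f t : PW M n} (h : ∀ x ∈ t, k ≤ countV f x.1) :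
    firstK k (f ++ t) = firstK k f := by
  rw [firstK, firstKAux_append, List.nil_append, firstKAux_eq_nil k h, List.append_nil]
  rfl

lemma countV_lt_of_firstKAux_eq {pre p u v : PW M n} {x : Fin n × M}
    (h : firstKAux k pre p = u ++ x :: v) : countV (pre ++ u) x.1 < k := by
  induction p generalizing pre u with
  | nil => simp [firstKAux] at h
  | cons l t ih =>
    rw [firstKAux_cons] at h
    split_ifs at h with hc
    · cases u with
      | nil =>
        obtain ⟨rfl, -⟩ := List.cons_eq_cons.mp h
        simpa using hc
      | cons y u =>
        obtain ⟨rfl, h'⟩ := List.cons_eq_cons.mp h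
        simpa using ih h'
    · have := ih h
      simp only [countV_append] at this ⊢
      omega

lemma le_countV_firstK_of_perm {p l : PW M n} {x : Fin n × M}
    (hp : p.Perm (firstK k p ++ l)) (hx : x ∈ l) : k ≤ countV (firstK k p) x.1 := by
  have hsum := countV_append (firstK k p) l x.1
  have hpos : 0 < countV l x.1 := List.countP_pos_iff.mpr ⟨x, hx, by simp⟩
  have hmin := countV_firstK k p x.1
  have hcount : countV p x.1 = countV (firstK k p ++ l) x.1 := hp.countP_eq _
  omega

lemma exists_eq_append_of_le_countV {f t p s : PW M n} {a : Fin n × M} (hf : firstK k f = f)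
    (h : f ++ t = p ++ a :: s) (ha : k ≤ countV p a.1) : ∃ w, p = f ++ w ∧ t = w ++ a :: s := by
  rcases List.append_eq_append_iff.mp h with h' | ⟨_ | ⟨b, bs⟩, hfp, hs⟩
  · exact h'
  · exact ⟨[], by simpa using hfp.symm, by simpa using hs.symm⟩
  · obtain ⟨rfl, -⟩ := List.cons_eq_cons.mp hs
    rw [hfp, firstK] at hf
    have := countV_lt_of_firstKAux_eq k hf
    rw [List.nil_append] at this
    omega

end FirstK

section Stalactite

variable [LinearOrder M] (k : ℕ)

/-- The order `⊴` on letters. -/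
abbrev LetterLE : Fin n × M → Fin n × M → Prop := Prod.Lex (· < ·) (· ≤ ·)

lemma isStalactite_append {f t : PW M n} (hf : firstK k f = f)
    (ht : ∀ x ∈ t, k ≤ countV f x.1) (hsorted : t.Pairwise LetterLE) :
    IsStalactite k (f ++ t) := by
  refine fun v => ⟨?_, ?_⟩
  · rintro ⟨p, p', i₁, i₂, α₁, α₂, hu, -, -, h₁, h₂⟩
    obtain ⟨w, rfl, rfl⟩ := exists_eq_append_of_le_countV k hf hu h₁
    have : k ≤ countV f i₂ := ht (i₂, α₂) (by simp)
    rw [countV_append] at h₂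
    omega
  · rintro ⟨p, p', i₁, i₂, α₁, α₂, hu, -, h₁, -, hne, hlt⟩
    obtain ⟨w, rfl, rfl⟩ := exists_eq_append_of_le_countV k hf hu h₁
    have hle : LetterLE (i₁, α₁) (i₂, α₂) :=
      List.rel_of_pairwise_cons (hsorted.sublist (List.sublist_append_right w _)) (by simp)
    exact hne (antisymm hle (Prod.lex_def.mpr hlt))

variable {k} {q : PW M n}

lemma IsStalactite.le_countV_and_letterLE (hq : IsStalactite k q) {pre r : PW M n}
    {a b : Fin n × M} (h : q = pre ++ a :: b :: r) (ha : k ≤ countV pre a.1) :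
    k ≤ countV (pre ++ [a]) b.1 ∧ LetterLE a b := by
  obtain ⟨i₁, α₁⟩ := a
  obtain ⟨i₂, α₂⟩ := b
  dsimp only at ha ⊢
  have hb : k ≤ countV pre i₂ := by
    by_contra! hlt
    have hne : i₁ ≠ i₂ := by rintro rfl; omega
    exact (hq _).1 ⟨pre, r, i₁, i₂, α₁, α₂, h, rfl, hne, ha, hlt⟩
  have hb' : k ≤ countV (pre ++ [(i₁, α₁)]) i₂ := by rw [countV_append]; omega
  refine ⟨hb', ?_⟩
  by_contra hab
  have hba := (total_of LetterLE (i₁, α₁) (i₂, α₂)).resolve_left hab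
  have hne : (i₁, α₁) ≠ (i₂, α₂) := by rintro h; exact hab (h ▸ refl_of LetterLE _)
  exact (hq _).2 ⟨pre, r, i₁, i₂, α₁, α₂, h, rfl, ha, hb', hne, Prod.lex_def.mp hba⟩

lemma IsStalactite.isChain_of_le_countV (hq : IsStalactite k q) {pre r : PW M n}
    {a : Fin n × M} (h : q = pre ++ a :: r) (ha : k ≤ countV pre a.1) :
    (a :: r).IsChain LetterLE ∧ firstKAux k (pre ++ [a]) r = [] := by
  induction r generalizing pre a with
  | nil => exact ⟨List.isChain_singleton a, rfl⟩
  | cons b r ih =>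
    obtain ⟨hb, hab⟩ := hq.le_countV_and_letterLE h ha
    obtain ⟨hchain, hnil⟩ := ih (pre := pre ++ [a]) (by simp [h]) hb
    refine ⟨List.isChain_cons_cons.mpr ⟨hab, hchain⟩, ?_⟩
    rw [firstKAux_cons, if_neg (not_lt.mpr hb), hnil]

lemma IsStalactite.exists_eq_firstKAux_append (hq : IsStalactite k q) {pre r : PW M n}
    (h : q = pre ++ r) : ∃ t, r = firstKAux k pre r ++ t ∧ t.Pairwise LetterLE := by
  induction r generalizing pre with
  | nil => exact ⟨[], rfl, List.Pairwise.nil⟩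
  | cons a r ih =>
    rw [firstKAux_cons]
    split_ifs with ha
    · obtain ⟨t, hr, ht⟩ := ih (pre := pre ++ [a]) (by simp [h])
      exact ⟨t, by rw [List.cons_append, ← hr], ht⟩
    · obtain ⟨hchain, hnil⟩ := hq.isChain_of_le_countV h (not_lt.mp ha)
      exact ⟨a :: r, by rw [hnil, List.nil_append], List.isChain_iff_pairwise.mp hchain⟩

lemma IsStalactite.exists_eq_firstK_append (hq : IsStalactite k q) :
    ∃ t, q = firstK k q ++ t ∧ t.Pairwise LetterLE :=
  hq.exists_eq_firstKAux_append (pre := []) rfl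

end Stalactite

end Words

theorem stalactite_unique_in_class_general (M : Type*) [LinearOrder M]
    (k : ℕ) (n : ℕ) (p : PW M n) :
    ∃! q : PW M n, (firstK k q = firstK k p ∧ q.Perm p) ∧ IsStalactite k q := by
  obtain ⟨l, hpl⟩ := (firstK_sublist k p).exists_perm_append
  have hsort := List.perm_insertionSort LetterLE l
  set t := l.insertionSort LetterLE
  have ht : ∀ x ∈ t, k ≤ countV (firstK k p) x.1 :=
    fun x hx => le_countV_firstK_of_perm k hpl (hsort.mem_iff.mp hx)
  have hperm : (firstK k p ++ t).Perm p := (hsort.append_left _).trans hpl.symm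
  refine ⟨firstK k p ++ t, ⟨⟨?_, hperm⟩, ?_⟩, ?_⟩
  · rw [firstK_append_of_le_countV k ht, firstK_firstK]
  · exact isStalactite_append k (firstK_firstK k p) ht (List.pairwise_insertionSort _ l)
  rintro q ⟨⟨hfq, hqp⟩, hq⟩
  obtain ⟨t', hqt', ht'⟩ := hq.exists_eq_firstK_append
  rw [hfq] at hqt'
  subst hqt'
  have htt : t'.Perm t := (List.perm_append_left_iff _).mp (hqp.trans hperm.symm)
  rw [htt.eq_of_pairwise' ht' (List.pairwise_insertionSort _ l)]

/-- Every equivalence class of the relation `p ≡ₖ p'` iff `firstK k p = firstK k p'`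
and `p'` is a permutation of `p` contains exactly one `k`-stalactite. -/
theorem stalactite_unique_in_class (M : Type*) [Monoid M] [LinearOrder M]
    (k : ℕ) (n : ℕ) (p : PW M n) :
    ∃! q : PW M n, (firstK k q = firstK k p ∧ q.Perm p) ∧ IsStalactite k q :=
  stalactite_unique_in_class_general M k n p
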